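/- (Extended Barenco decomposition) For every a, b ∈ {1,2,3} and every positive integer k, the doubly-controlled k-th Pauli root satisfies the 8×8 matrix identity: E₀₀⊗1⊗1 + E₁₁⊗C₁(σ_a^{1/k}) = (1⊗1⊗ρ_{ab}) · (E₀₀⊗1⊗1 + E₁₁⊗1⊗σ_b^{1/(2k)}) · (C₁(X)⊗1) · (1⊗C₁((σ_b^{1/(2k)})†)) · (C₁(X)⊗1) · (1⊗C₁(σ_b^{1/(2k)})) · (1⊗1⊗ρ_{ab}), where ρ_{ab} := (σ_a+σ_b)/√2 for a ≠ b and ρ_{aa} is taken to be the 2×2 identity matrix. Here the left-hand side is the gate applying σ_a^{1/k} to qubit 3 controlled on qubits 1 and 2, and the factor E₀₀⊗1⊗1 + E₁₁⊗1⊗σ_b^{1/(2k)} applies σ_b^{1/(2k)} to qubit 3 controlled on qubit 1. -/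
import Mathlib

open Matrix Complex
open scoped Kronecker

noncomputable section

/-- The Pauli matrices σ₁ = X, σ₂ = Y, σ₃ = Z. -/
def σ : ℕ → Matrix (Fin 2) (Fin 2) ℂ
  | 1 => !![0, 1; 1, 0]
  | 2 => !![0, -Complex.I; Complex.I, 0]
  | 3 => !![1, 0; 0, -1]
  | _ => 1

/-- Rotation by angle θ around axis a: R_a(θ) = cos(θ/2)·1 − i·sin(θ/2)·σ_a. -/
def R (a : ℕ) (θ : ℝ) : Matrix (Fin 2) (Fin 2) ℂ :=
  (Real.cos (θ / 2) : ℂ) • (1 : Matrix (Fin 2) (Fin 2) ℂ)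
    - (Complex.I * (Real.sin (θ / 2) : ℂ)) • σ a

/-- The k-th Pauli root σ_a^{1/k} = e^{iπ/(2k)}·R_a(π/k). -/
def pauliRoot (a k : ℕ) : Matrix (Fin 2) (Fin 2) ℂ :=
  Complex.exp (Complex.I * (Real.pi : ℂ) / (2 * (k : ℂ))) • R a (Real.pi / (k : ℝ))

def E00 : Matrix (Fin 2) (Fin 2) ℂ := !![1, 0; 0, 0]
def E11 : Matrix (Fin 2) (Fin 2) ℂ := !![0, 0; 0, 1]

/-- Controlled gate, control on the first qubit. -/
def C₁ (U : Matrix (Fin 2) (Fin 2) ℂ) : Matrix (Fin 2 × Fin 2) (Fin 2 × Fin 2) ℂ :=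
  E00 ⊗ₖ (1 : Matrix (Fin 2) (Fin 2) ℂ) + E11 ⊗ₖ U

/-- Controlled gate, control on the second qubit. -/
def C₂ (U : Matrix (Fin 2) (Fin 2) ℂ) : Matrix (Fin 2 × Fin 2) (Fin 2 × Fin 2) ℂ :=
  (1 : Matrix (Fin 2) (Fin 2) ℂ) ⊗ₖ E00 + U ⊗ₖ E11

/-- Reinterpret a (2-qubit ⊗ 1-qubit) matrix as a 3-qubit matrix via the
canonical associator (Fin 2 × Fin 2) × Fin 2 ≃ Fin 2 × (Fin 2 × Fin 2). -/
def assocM (A : Matrix ((Fin 2 × Fin 2) × Fin 2) ((Fin 2 × Fin 2) × Fin 2) ℂ) :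
    Matrix (Fin 2 × Fin 2 × Fin 2) (Fin 2 × Fin 2 × Fin 2) ℂ :=
  Matrix.reindex (Equiv.prodAssoc (Fin 2) (Fin 2) (Fin 2))
    (Equiv.prodAssoc (Fin 2) (Fin 2) (Fin 2)) A

def X : Matrix (Fin 2) (Fin 2) ℂ := !![0, 1; 1, 0]

/-- Translation matrix ρ_{ab} for a ≠ b, with ρ_{aa} = 1. -/
def ρ (a b : ℕ) : Matrix (Fin 2) (Fin 2) ℂ :=
  if a = b then 1 else ((Real.sqrt 2 : ℂ))⁻¹ • (σ a + σ b)

/-! ### Auxiliary lemmas -/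

lemma sigma_herm : ∀ a ∈ ({1,2,3} : Set ℕ), (σ a)ᴴ = σ a := by
  intro a ha
  rcases ha with rfl | rfl | rfl <;>
    · ext i j
      fin_cases i <;> fin_cases j <;> simp [σ, Matrix.conjTranspose_apply]

lemma sigma_sq : ∀ a ∈ ({1,2,3} : Set ℕ), σ a * σ a = 1 := by
  intro a ha
  rcases ha with rfl | rfl | rfl <;>
    simp [σ, ← Matrix.ext_iff, Fin.forall_fin_two, Matrix.mul_apply, Fin.sum_univ_two,
      Matrix.one_apply, Complex.ext_iff]

lemma sigma_anti : ∀ a ∈ ({1,2,3} : Set ℕ), ∀ b ∈ ({1,2,3} : Set ℕ), a ≠ b →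
    σ a * σ b = -(σ b * σ a) := by
  intro a ha b hb hab
  rcases ha with rfl | rfl | rfl <;> rcases hb with rfl | rfl | rfl <;>
    first
    | exact absurd rfl hab
    | simp [σ, ← Matrix.ext_iff, Fin.forall_fin_two, Matrix.mul_apply, Fin.sum_univ_two,
        Complex.ext_iff]

lemma R_mul_R (a : ℕ) (hsq : σ a * σ a = 1) (θ φ : ℝ) : R a θ * R a φ = R a (θ + φ) := by
  have h2 : (θ + φ) / 2 = θ / 2 + φ / 2 := by ring
  simp only [R, sub_mul, mul_sub, smul_mul_assoc, mul_smul_comm, smul_smul, one_mul, mul_one,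
    hsq, h2, Real.cos_add, Real.sin_add]
  push_cast
  match_scalars <;> ring_nf <;> simp [Complex.I_sq] <;> ring

lemma R_conjT (a : ℕ) (h : (σ a)ᴴ = σ a) (θ : ℝ) : (R a θ)ᴴ = R a (-θ) := by
  simp only [R, conjTranspose_sub, conjTranspose_smul, conjTranspose_one, h, _root_.map_mul,
    Complex.star_def, Complex.conj_I, Complex.conj_ofReal, neg_div, Real.cos_neg, Real.sin_neg,
    Complex.ofReal_neg]
  module

lemma R_zero (a : ℕ) : R a 0 = 1 := by simp [R]

lemma exp_conj_self (m : ℕ) :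
    (starRingEnd ℂ) (Complex.exp (Complex.I * (Real.pi : ℂ) / (2 * (m : ℂ)))) *
      Complex.exp (Complex.I * (Real.pi : ℂ) / (2 * (m : ℂ))) = 1 := by
  rw [← Complex.exp_conj, ← Complex.exp_add]
  have : (starRingEnd ℂ) (Complex.I * (Real.pi : ℂ) / (2 * (m : ℂ))) =
      -(Complex.I * (Real.pi : ℂ) / (2 * (m : ℂ))) := by
    simp [map_div₀, Complex.conj_I, Complex.conj_natCast, map_ofNat]
    ring
  rw [this, neg_add_cancel, Complex.exp_zero]

lemma pauliRoot_conjT_mul (a m : ℕ) (h : (σ a)ᴴ = σ a) (hsq : σ a * σ a = 1) :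
    (pauliRoot a m)ᴴ * pauliRoot a m = 1 := by
  rw [pauliRoot, conjTranspose_smul, R_conjT a h, smul_mul_assoc, mul_smul_comm, smul_smul,
    R_mul_R a hsq, neg_add_cancel, R_zero]
  simp only [Complex.star_def]
  rw [exp_conj_self m, one_smul]

lemma pauliRoot_mul_conjT (a m : ℕ) (h : (σ a)ᴴ = σ a) (hsq : σ a * σ a = 1) :
    pauliRoot a m * (pauliRoot a m)ᴴ = 1 := by
  rw [pauliRoot, conjTranspose_smul, R_conjT a h, smul_mul_assoc, mul_smul_comm, smul_smul,
    R_mul_R a hsq, add_neg_cancel, R_zero]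
  simp only [Complex.star_def]
  rw [mul_comm (Complex.exp _), exp_conj_self m, one_smul]

lemma pauliRoot_sq (b k : ℕ) (hk : 0 < k) (hsq : σ b * σ b = 1) :
    pauliRoot b (2 * k) * pauliRoot b (2 * k) = pauliRoot b k := by
  have hk' : (k : ℝ) ≠ 0 := Nat.cast_ne_zero.mpr hk.ne'
  have hk'' : (k : ℂ) ≠ 0 := Nat.cast_ne_zero.mpr hk.ne'
  rw [pauliRoot, pauliRoot, smul_mul_assoc, mul_smul_comm, smul_smul, R_mul_R b hsq,
    ← Complex.exp_add]
  congr 2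
  · push_cast
    field_simp
    ring
  · push_cast
    field_simp
    ring

lemma rho_sq (a b : ℕ) (hsa : σ a * σ a = 1) (hsb : σ b * σ b = 1)
    (hanti : a ≠ b → σ a * σ b = -(σ b * σ a)) : ρ a b * ρ a b = 1 := by
  rw [ρ]
  split_ifs with hab
  · simp
  · rw [smul_mul_assoc, mul_smul_comm, smul_smul, add_mul, mul_add, mul_add, hsa, hsb,
      hanti hab]
    have h2 : ((Real.sqrt 2 : ℂ))⁻¹ * ((Real.sqrt 2 : ℂ))⁻¹ = (2 : ℂ)⁻¹ := by
      rw [← mul_inv, ← Complex.ofReal_mul, Real.mul_self_sqrt (by norm_num)]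
      norm_num
    rw [h2]
    have : (1 : Matrix (Fin 2) (Fin 2) ℂ) + -(σ b * σ a) + (σ b * σ a + 1)
        = (2 : ℂ) • 1 := by
      rw [two_smul]; abel
    rw [this, smul_smul]
    norm_num

lemma rho_conj (a b : ℕ) (hsa : σ a * σ a = 1) (hsb : σ b * σ b = 1)
    (hanti : a ≠ b → σ a * σ b = -(σ b * σ a)) : ρ a b * σ b * ρ a b = σ a := by
  rw [ρ]
  split_ifs with hab
  · simp [hab]
  · rw [smul_mul_assoc, smul_mul_assoc, mul_smul_comm, smul_smul]
    have h2 : ((Real.sqrt 2 : ℂ))⁻¹ * ((Real.sqrt 2 : ℂ))⁻¹ = (2 : ℂ)⁻¹ := by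
      rw [← mul_inv, ← Complex.ofReal_mul, Real.mul_self_sqrt (by norm_num)]
      norm_num
    rw [h2]
    have key : (σ a + σ b) * σ b * (σ a + σ b) = (2 : ℂ) • σ a := by
      have h1 : σ a * σ b * σ a = -σ b := by
        rw [hanti hab, neg_mul, mul_assoc, hsa, mul_one]
      have h3 : σ a * σ b * σ b = σ a := by rw [mul_assoc, hsb, mul_one]
      rw [add_mul, hsb, add_mul, one_mul, mul_add, h1, h3]
      rw [two_smul]; abel
    rw [key, smul_smul]
    norm_num

lemma rho_pauliRoot (a b m : ℕ) (hsa : σ a * σ a = 1) (hsb : σ b * σ b = 1)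
    (hanti : a ≠ b → σ a * σ b = -(σ b * σ a)) :
    ρ a b * pauliRoot b m * ρ a b = pauliRoot a m := by
  rw [pauliRoot, pauliRoot, mul_smul_comm, smul_mul_assoc]
  congr 1
  rw [R, R, mul_sub, sub_mul, mul_smul_comm, smul_mul_assoc, mul_one,
    mul_smul_comm, smul_mul_assoc, rho_conj a b hsa hsb hanti,
    rho_sq a b hsa hsb hanti]

/-! ### Block matrix machinery -/

lemma E00_mul_E00 : E00 * E00 = E00 := by
  ext i j
  fin_cases i <;> fin_cases j <;>
    simp [E00, Matrix.mul_apply, Fin.sum_univ_two]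

lemma E00_mul_E11 : E00 * E11 = 0 := by
  ext i j
  fin_cases i <;> fin_cases j <;>
    simp [E00, E11, Matrix.mul_apply, Fin.sum_univ_two]

lemma E11_mul_E00 : E11 * E00 = 0 := by
  ext i j
  fin_cases i <;> fin_cases j <;>
    simp [E00, E11, Matrix.mul_apply, Fin.sum_univ_two]

lemma E11_mul_E11 : E11 * E11 = E11 := by
  ext i j
  fin_cases i <;> fin_cases j <;>
    simp [E11, Matrix.mul_apply, Fin.sum_univ_two]

lemma E_sum : E00 + E11 = (1 : Matrix (Fin 2) (Fin 2) ℂ) := by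
  simp [E00, E11, ← Matrix.ext_iff, Fin.forall_fin_two, Matrix.one_apply]

lemma X_E00_X : X * E00 * X = E11 := by
  ext i j
  fin_cases i <;> fin_cases j <;>
    simp [X, E00, E11, Matrix.mul_apply, Fin.sum_univ_two]

lemma X_E11_X : X * E11 * X = E00 := by
  ext i j
  fin_cases i <;> fin_cases j <;>
    simp [X, E00, E11, Matrix.mul_apply, Fin.sum_univ_two]

lemma block_mul {n : Type*} [Fintype n] [DecidableEq n] (M N P Q : Matrix n n ℂ) :
    (E00 ⊗ₖ M + E11 ⊗ₖ N) * (E00 ⊗ₖ P + E11 ⊗ₖ Q) = E00 ⊗ₖ (M * P) + E11 ⊗ₖ (N * Q) := by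
  rw [add_mul, mul_add, mul_add, ← Matrix.mul_kronecker_mul, ← Matrix.mul_kronecker_mul,
    ← Matrix.mul_kronecker_mul, ← Matrix.mul_kronecker_mul, E00_mul_E00, E00_mul_E11,
    E11_mul_E00, E11_mul_E11, Matrix.zero_kronecker, Matrix.zero_kronecker, add_zero, zero_add]

lemma one_kron {n : Type*} [Fintype n] [DecidableEq n] (A : Matrix n n ℂ) :
    (1 : Matrix (Fin 2) (Fin 2) ℂ) ⊗ₖ A = E00 ⊗ₖ A + E11 ⊗ₖ A := by
  rw [← E_sum, Matrix.add_kronecker]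

lemma assocM_CX :
    assocM (C₁ X ⊗ₖ (1 : Matrix (Fin 2) (Fin 2) ℂ))
      = E00 ⊗ₖ ((1 : Matrix (Fin 2) (Fin 2) ℂ) ⊗ₖ (1 : Matrix (Fin 2) (Fin 2) ℂ))
        + E11 ⊗ₖ (X ⊗ₖ (1 : Matrix (Fin 2) (Fin 2) ℂ)) := by
  rw [C₁, Matrix.add_kronecker]
  simp [assocM, Matrix.reindex_apply, Matrix.submatrix_add, Matrix.kronecker_assoc']

/-! ### Main theorem -/

/-- Extended Barenco decomposition of the doubly-controlled k-th Pauli root. -/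
theorem barenco_extended :
    ∀ a ∈ ({1, 2, 3} : Set ℕ), ∀ b ∈ ({1, 2, 3} : Set ℕ), ∀ k : ℕ, 0 < k →
      E00 ⊗ₖ ((1 : Matrix (Fin 2) (Fin 2) ℂ) ⊗ₖ (1 : Matrix (Fin 2) (Fin 2) ℂ))
          + E11 ⊗ₖ C₁ (pauliRoot a k)
        = ((1 : Matrix (Fin 2) (Fin 2) ℂ) ⊗ₖ ((1 : Matrix (Fin 2) (Fin 2) ℂ) ⊗ₖ ρ a b))
            * (E00 ⊗ₖ ((1 : Matrix (Fin 2) (Fin 2) ℂ) ⊗ₖ (1 : Matrix (Fin 2) (Fin 2) ℂ))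
                + E11 ⊗ₖ ((1 : Matrix (Fin 2) (Fin 2) ℂ) ⊗ₖ pauliRoot b (2 * k)))
            * assocM (C₁ X ⊗ₖ (1 : Matrix (Fin 2) (Fin 2) ℂ))
            * ((1 : Matrix (Fin 2) (Fin 2) ℂ) ⊗ₖ C₁ ((pauliRoot b (2 * k))ᴴ))
            * assocM (C₁ X ⊗ₖ (1 : Matrix (Fin 2) (Fin 2) ℂ))
            * ((1 : Matrix (Fin 2) (Fin 2) ℂ) ⊗ₖ C₁ (pauliRoot b (2 * k)))
            * ((1 : Matrix (Fin 2) (Fin 2) ℂ) ⊗ₖ ((1 : Matrix (Fin 2) (Fin 2) ℂ) ⊗ₖ ρ a b)) := by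
  intro a ha b hb k hk
  have hha := sigma_herm a ha
  have hhb := sigma_herm b hb
  have hsa := sigma_sq a ha
  have hsb := sigma_sq b hb
  have hanti := sigma_anti a ha b hb
  set V := pauliRoot b (2 * k) with hV
  set r := ρ a b with hr
  have hU1 : Vᴴ * V = 1 := pauliRoot_conjT_mul b (2 * k) hhb hsb
  have hU2 : V * Vᴴ = 1 := pauliRoot_mul_conjT b (2 * k) hhb hsb
  have hρ2 : r * r = 1 := rho_sq a b hsa hsb hanti
  have hkey : r * (V * V) * r = pauliRoot a k := by
    rw [hV, pauliRoot_sq b k hk hsb, hr, rho_pauliRoot a b k hsa hsb hanti]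
  -- C₁ Vᴴ * C₁ V = 1
  have hC : C₁ Vᴴ * C₁ V = 1 := by
    rw [C₁, C₁, block_mul, mul_one, hU1, ← Matrix.add_kronecker, E_sum,
      Matrix.one_kronecker_one]
  -- q1 = 0 block
  have hb0 : ((1 : Matrix (Fin 2) (Fin 2) ℂ) ⊗ₖ r)
        * ((1 : Matrix (Fin 2) (Fin 2) ℂ) ⊗ₖ (1 : Matrix (Fin 2) (Fin 2) ℂ))
        * ((1 : Matrix (Fin 2) (Fin 2) ℂ) ⊗ₖ (1 : Matrix (Fin 2) (Fin 2) ℂ))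
        * C₁ Vᴴ
        * ((1 : Matrix (Fin 2) (Fin 2) ℂ) ⊗ₖ (1 : Matrix (Fin 2) (Fin 2) ℂ))
        * C₁ V
        * ((1 : Matrix (Fin 2) (Fin 2) ℂ) ⊗ₖ r)
      = (1 : Matrix (Fin 2) (Fin 2) ℂ) ⊗ₖ (1 : Matrix (Fin 2) (Fin 2) ℂ) := by
    rw [Matrix.one_kronecker_one, mul_one, mul_one, mul_one, mul_assoc _ (C₁ Vᴴ), hC, mul_one,
      ← Matrix.mul_kronecker_mul, one_mul, hρ2, Matrix.one_kronecker_one]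
  -- q1 = 1 block
  have s1 : ((1 : Matrix (Fin 2) (Fin 2) ℂ) ⊗ₖ r)
        * ((1 : Matrix (Fin 2) (Fin 2) ℂ) ⊗ₖ V)
      = (1 : Matrix (Fin 2) (Fin 2) ℂ) ⊗ₖ (r * V) := by
    rw [← Matrix.mul_kronecker_mul, one_mul]
  have s2 : ((1 : Matrix (Fin 2) (Fin 2) ℂ) ⊗ₖ (r * V))
        * (X ⊗ₖ (1 : Matrix (Fin 2) (Fin 2) ℂ))
      = X ⊗ₖ (r * V) := by
    rw [← Matrix.mul_kronecker_mul, one_mul, mul_one]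
  have s3 : (X ⊗ₖ (r * V)) * C₁ Vᴴ
      = (X * E00) ⊗ₖ (r * V) + (X * E11) ⊗ₖ r := by
    rw [C₁, mul_add, ← Matrix.mul_kronecker_mul, ← Matrix.mul_kronecker_mul, mul_one,
      mul_assoc r V Vᴴ, hU2, mul_one]
  have s4 : ((X * E00) ⊗ₖ (r * V) + (X * E11) ⊗ₖ r)
        * (X ⊗ₖ (1 : Matrix (Fin 2) (Fin 2) ℂ))
      = E00 ⊗ₖ r + E11 ⊗ₖ (r * V) := by
    rw [add_mul, ← Matrix.mul_kronecker_mul, ← Matrix.mul_kronecker_mul, mul_one, mul_one,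
      X_E00_X, X_E11_X, add_comm]
  have s5 : (E00 ⊗ₖ r + E11 ⊗ₖ (r * V)) * C₁ V
      = E00 ⊗ₖ r + E11 ⊗ₖ (r * V * V) := by
    rw [C₁, block_mul, mul_one, mul_assoc]
  have s6 : (E00 ⊗ₖ r + E11 ⊗ₖ (r * V * V)) * ((1 : Matrix (Fin 2) (Fin 2) ℂ) ⊗ₖ r)
      = C₁ (pauliRoot a k) := by
    rw [one_kron, block_mul, hρ2, ← hkey, C₁, mul_assoc r V V]
  have hb1 : ((1 : Matrix (Fin 2) (Fin 2) ℂ) ⊗ₖ r)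
        * ((1 : Matrix (Fin 2) (Fin 2) ℂ) ⊗ₖ V)
        * (X ⊗ₖ (1 : Matrix (Fin 2) (Fin 2) ℂ))
        * C₁ Vᴴ
        * (X ⊗ₖ (1 : Matrix (Fin 2) (Fin 2) ℂ))
        * C₁ V
        * ((1 : Matrix (Fin 2) (Fin 2) ℂ) ⊗ₖ r)
      = C₁ (pauliRoot a k) := by
    rw [s1, s2, s3, s4, s5, s6]
  rw [assocM_CX, one_kron ((1 : Matrix (Fin 2) (Fin 2) ℂ) ⊗ₖ r), one_kron (C₁ Vᴴ),
    one_kron (C₁ V), block_mul, block_mul, block_mul, block_mul, block_mul, block_mul,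
    hb0, hb1]
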